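/- arXiv:2506.05681 — 2 statements merged into one kernel-verified Lean document; each statement's English description precedes it below -/
import Mathlib

section
/- The map φ: ℝ²/Γ_EL → ℂ³ defined by φ(x,y) = (1/√(8π²)) (exp(2πi(x − y/√3)), exp(4πi y/√3), exp(2πi(x + y/√3))), where Γ_EL = ℤ(1,0) ⊕ ℤ(1/2,√3/2), is well-defined, injective, its image lies in the sphere of radius √(3/(8π²)) in ℂ³ ≅ ℝ⁶, and it is an isometric immersion with respect to the equilateral flat metric h_EL = dx² + dy² (induced from the Euclidean metric on ℝ²). -/
/- STATEMENT 7: the map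
`φ(x,y) = (1/√(8π²))(e^{2πi(x−y/√3)}, e^{4πiy/√3}, e^{2πi(x+y/√3)})` descends to the
torus `ℝ²/Γ_EL` (Γ_EL = ℤ(1,0) ⊕ ℤ(1/2,√3/2)): it is Γ_EL-periodic, injective modulo
Γ_EL, its image lies in the sphere of radius `√(3/(8π²))` in `ℂ³ ≅ ℝ⁶`, and it is an
isometric immersion for the equilateral flat metric (the Euclidean metric of ℝ²). -/

open Real

/-- The equilateral lattice `Γ_EL = ℤ(1,0) ⊕ ℤ(1/2, √3/2)` in the plane. -/
noncomputable def inLatticeEL (γ : EuclideanSpace ℝ (Fin 2)) : Prop :=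
  ∃ m n : ℤ, γ = m • (WithLp.equiv 2 (Fin 2 → ℝ)).symm ![1, 0]
            + n • (WithLp.equiv 2 (Fin 2 → ℝ)).symm ![1 / 2, Real.sqrt 3 / 2]

noncomputable def phiEL : EuclideanSpace ℝ (Fin 2) → EuclideanSpace ℂ (Fin 3) := fun x =>
  (WithLp.equiv 2 (Fin 3 → ℂ)).symm
    ![ (1 / Real.sqrt (8 * π ^ 2) : ℂ) *
         Complex.exp (↑(2 * π * (x 0 - x 1 / Real.sqrt 3)) * Complex.I),
       (1 / Real.sqrt (8 * π ^ 2) : ℂ) *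
         Complex.exp (↑(4 * π * x 1 / Real.sqrt 3) * Complex.I),
       (1 / Real.sqrt (8 * π ^ 2) : ℂ) *
         Complex.exp (↑(2 * π * (x 0 + x 1 / Real.sqrt 3)) * Complex.I) ]

-- helper lemmas
lemma exp_eq_of (a b : ℝ) (n : ℤ) (h : a = b + 2 * π * n) :
    Complex.exp (↑a * Complex.I) = Complex.exp (↑b * Complex.I) := by
  subst h
  push_cast
  rw [add_mul, Complex.exp_add,
    show ((2 * π * n : ℂ)) * Complex.I = n * (2 * π * Complex.I) by ring,
    Complex.exp_int_mul_two_pi_mul_I, mul_one]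

lemma exp_inj (a b : ℝ) (h : Complex.exp (↑a * Complex.I) = Complex.exp (↑b * Complex.I)) :
    ∃ n : ℤ, a = b + 2 * π * n := by
  rw [Complex.exp_eq_exp_iff_exists_int] at h
  obtain ⟨n, hn⟩ := h
  refine ⟨n, ?_⟩
  have := congrArg Complex.im hn
  simpa [Complex.add_im, Complex.mul_im, mul_comm] using this




noncomputable def Lc (α β : ℝ) : EuclideanSpace ℝ (Fin 2) →L[ℝ] ℝ :=
  α • EuclideanSpace.proj 0 + β • EuclideanSpace.proj (1 : Fin 2)

lemma Lc_apply (α β : ℝ) (x : EuclideanSpace ℝ (Fin 2)) : Lc α β x = α * x 0 + β * x 1 := by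
  simp [Lc]

noncomputable def comp1 (α β : ℝ) : EuclideanSpace ℝ (Fin 2) → ℂ := fun x =>
  (1 / Real.sqrt (8 * π ^ 2) : ℂ) * Complex.exp (↑(Lc α β x) * Complex.I)

noncomputable def Dc (α β : ℝ) (x : EuclideanSpace ℝ (Fin 2)) :
    EuclideanSpace ℝ (Fin 2) →L[ℝ] ℂ :=
  ((1 / Real.sqrt (8 * π ^ 2) : ℂ) * Complex.exp (↑(Lc α β x) * Complex.I)) •
    ((Lc α β).smulRight Complex.I)

lemma hasFDeriv_comp1 (α β : ℝ) (x : EuclideanSpace ℝ (Fin 2)) :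
    HasFDerivAt (comp1 α β) (Dc α β x) x := by
  have h1 : HasFDerivAt (fun y => (↑(Lc α β y) : ℂ) * Complex.I)
      ((Lc α β).smulRight Complex.I) x := by
    have heq : (fun y => (↑(Lc α β y) : ℂ) * Complex.I)
        = ⇑((Lc α β).smulRight Complex.I) := by
      funext y; simp [Complex.real_smul]
    rw [heq]
    exact ((Lc α β).smulRight Complex.I).hasFDerivAt
  have h2 := h1.cexp
  have h3 := h2.const_mul ((1 / Real.sqrt (8 * π ^ 2) : ℂ))
  have : (1 / Real.sqrt (8 * π ^ 2) : ℂ) •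
      (Complex.exp (↑(Lc α β x) * Complex.I) • (Lc α β).smulRight Complex.I) = Dc α β x := by
    rw [smul_smul]; rfl
  rw [this] at h3
  exact h3

lemma Dc_apply (α β : ℝ) (x v : EuclideanSpace ℝ (Fin 2)) :
    Dc α β x v = ((1 / Real.sqrt (8 * π ^ 2) : ℂ) * Complex.exp (↑(Lc α β x) * Complex.I))
      * (↑(Lc α β v) * Complex.I) := by
  simp [Dc, Complex.real_smul]

lemma norm_Dc (α β : ℝ) (x v : EuclideanSpace ℝ (Fin 2)) (hπ : 0 < π) :
    ‖Dc α β x v‖ = (1 / Real.sqrt (8 * π ^ 2)) * |Lc α β v| := by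
  rw [Dc_apply]
  rw [norm_mul, norm_mul, norm_mul]
  simp [Complex.norm_exp_ofReal_mul_I, Complex.norm_real,
    abs_of_nonneg (Real.sqrt_nonneg _)]

noncomputable def isoE : (Fin 3 → ℂ) →L[ℝ] EuclideanSpace ℂ (Fin 3) :=
  ((EuclideanSpace.equiv (Fin 3) ℂ).symm.toContinuousLinearMap).restrictScalars ℝ

lemma isoE_apply (w : Fin 3 → ℂ) : isoE w = (WithLp.equiv 2 (Fin 3 → ℂ)).symm w := rfl

noncomputable def DphiEL (x : EuclideanSpace ℝ (Fin 2)) :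
    EuclideanSpace ℝ (Fin 2) →L[ℝ] EuclideanSpace ℂ (Fin 3) :=
  isoE.comp
    (ContinuousLinearMap.pi
      ![Dc (2 * π) (-(2 * π) / Real.sqrt 3) x,
        Dc 0 (4 * π / Real.sqrt 3) x,
        Dc (2 * π) (2 * π / Real.sqrt 3) x])

lemma comp1_eq (α β : ℝ) (θ : ℝ) (y : EuclideanSpace ℝ (Fin 2)) (h : θ = α * y 0 + β * y 1) :
    (1 / Real.sqrt (8 * π ^ 2) : ℂ) * Complex.exp (↑θ * Complex.I) = comp1 α β y := by
  rw [comp1, Lc_apply, h]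

lemma hasFDeriv_phiEL (x : EuclideanSpace ℝ (Fin 2)) :
    HasFDerivAt phiEL (DphiEL x) x := by
  have key : HasFDerivAt
      (fun y i => ![comp1 (2 * π) (-(2 * π) / Real.sqrt 3),
                    comp1 0 (4 * π / Real.sqrt 3),
                    comp1 (2 * π) (2 * π / Real.sqrt 3)] i y)
      (ContinuousLinearMap.pi
        ![Dc (2 * π) (-(2 * π) / Real.sqrt 3) x,
          Dc 0 (4 * π / Real.sqrt 3) x,
          Dc (2 * π) (2 * π / Real.sqrt 3) x]) x := by
    rw [hasFDerivAt_pi]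
    intro i
    fin_cases i <;> simp <;> exact hasFDeriv_comp1 _ _ x
  have key2 := isoE.hasFDerivAt.comp x key
  have heq : phiEL = ⇑isoE ∘ (fun y i => ![comp1 (2 * π) (-(2 * π) / Real.sqrt 3),
                    comp1 0 (4 * π / Real.sqrt 3),
                    comp1 (2 * π) (2 * π / Real.sqrt 3)] i y) := by
    funext y
    show (WithLp.equiv 2 (Fin 3 → ℂ)).symm _ = (WithLp.equiv 2 (Fin 3 → ℂ)).symm _
    congr 1
    funext i
    fin_cases i
    · exact comp1_eq _ _ _ y (by ring)
    · exact comp1_eq _ _ _ y (by ring)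
    · exact comp1_eq _ _ _ y (by ring)
  rw [heq]
  exact key2

lemma norm_phiEL (x : EuclideanSpace ℝ (Fin 2)) :
    ‖phiEL x‖ = Real.sqrt (3 / (8 * π ^ 2)) := by
  have hq0 : (0:ℝ) < Real.sqrt (8 * π ^ 2) := Real.sqrt_pos.mpr (by positivity)
  have hq : Real.sqrt (8 * π ^ 2) ^ 2 = 8 * π ^ 2 := Real.sq_sqrt (by positivity)
  rw [phiEL, EuclideanSpace.norm_eq]
  simp only [WithLp.equiv_symm_apply, PiLp.toLp_apply, Fin.sum_univ_three, Matrix.cons_val_zero,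
    Matrix.cons_val_one, Matrix.head_cons, Matrix.cons_val_two, Matrix.tail_cons]
  rw [norm_mul, norm_mul, norm_mul]
  simp only [Complex.norm_exp_ofReal_mul_I, mul_one]
  have hc : ‖(1 / (Real.sqrt (8 * π ^ 2) : ℂ))‖ = 1 / Real.sqrt (8 * π ^ 2) := by
    rw [norm_div, norm_one, Complex.norm_real, Real.norm_eq_abs, abs_of_pos hq0]
  rw [hc]
  have h8 : Real.sqrt 8 ^ 2 = 8 := Real.sq_sqrt (by norm_num)
  congr 1
  field_simp
  linear_combination (-3) * hq

lemma norm_DphiEL (x v : EuclideanSpace ℝ (Fin 2)) : ‖DphiEL x v‖ = ‖v‖ := by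
  have hπ : (0:ℝ) < π := pi_pos
  have hq0 : (0:ℝ) < Real.sqrt (8 * π ^ 2) := Real.sqrt_pos.mpr (by positivity)
  have hq : Real.sqrt (8 * π ^ 2) ^ 2 = 8 * π ^ 2 := Real.sq_sqrt (by positivity)
  have hs0 : (0:ℝ) < Real.sqrt 3 := Real.sqrt_pos.mpr (by norm_num)
  have hs : Real.sqrt 3 ^ 2 = 3 := Real.sq_sqrt (by norm_num)
  have h8 : Real.sqrt 8 ^ 2 = 8 := Real.sq_sqrt (by norm_num)
  have h1 : DphiEL x v = (WithLp.equiv 2 (Fin 3 → ℂ)).symm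
      (fun i => ![Dc (2 * π) (-(2 * π) / Real.sqrt 3) x,
        Dc 0 (4 * π / Real.sqrt 3) x,
        Dc (2 * π) (2 * π / Real.sqrt 3) x] i v) := rfl
  rw [h1, EuclideanSpace.norm_eq, EuclideanSpace.norm_eq (𝕜 := ℝ) v]
  simp only [WithLp.equiv_symm_apply, PiLp.toLp_apply, Fin.sum_univ_three, Fin.sum_univ_two,
    Matrix.cons_val_zero, Matrix.cons_val_one, Matrix.head_cons,
    Matrix.cons_val_two, Matrix.tail_cons, Real.norm_eq_abs, sq_abs]
  rw [norm_Dc _ _ _ _ hπ, norm_Dc _ _ _ _ hπ, norm_Dc _ _ _ _ hπ]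
  simp only [Lc_apply, mul_pow, sq_abs]
  congr 1
  field_simp
  linear_combination (8*π^2*(v 0)^2 - ((v 0)^2+(v 1)^2) * Real.sqrt (8 * π ^ 2) ^ 2) * hs
    - (3*((v 0)^2+(v 1)^2)) * hq


lemma periodic' (x γ : EuclideanSpace ℝ (Fin 2))
    (h : ∃ m n : ℤ, γ = m • (WithLp.equiv 2 (Fin 2 → ℝ)).symm ![1, 0]
            + n • (WithLp.equiv 2 (Fin 2 → ℝ)).symm ![1 / 2, Real.sqrt 3 / 2]) :
    phiEL (x + γ) = phiEL x := by
  obtain ⟨m, n, rfl⟩ := h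
  have hs0 : (0:ℝ) < Real.sqrt 3 := Real.sqrt_pos.mpr (by norm_num)
  have hs : Real.sqrt 3 ^ 2 = 3 := Real.sq_sqrt (by norm_num)
  have hsne : Real.sqrt 3 ≠ 0 := ne_of_gt hs0
  have e0 : (x + (m • (WithLp.equiv 2 (Fin 2 → ℝ)).symm ![1, 0]
      + n • (WithLp.equiv 2 (Fin 2 → ℝ)).symm ![1 / 2, Real.sqrt 3 / 2])) 0
      = x 0 + m + n / 2 := by
    simp [WithLp.equiv_symm_apply, PiLp.toLp_apply]
    ring
  have e1 : (x + (m • (WithLp.equiv 2 (Fin 2 → ℝ)).symm ![1, 0]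
      + n • (WithLp.equiv 2 (Fin 2 → ℝ)).symm ![1 / 2, Real.sqrt 3 / 2])) 1
      = x 1 + n * Real.sqrt 3 / 2 := by
    simp [WithLp.equiv_symm_apply, PiLp.toLp_apply]
    ring
  rw [phiEL, phiEL, e0, e1]
  congr 1
  funext i
  fin_cases i
  · simp only [Matrix.cons_val_zero]
    exact congrArg (fun z => (1 / Real.sqrt (8 * π ^ 2) : ℂ) * z)
      (exp_eq_of _ _ m (by field_simp; ring))
  · simp only [Matrix.cons_val_one, Matrix.head_cons]
    exact congrArg (fun z => (1 / Real.sqrt (8 * π ^ 2) : ℂ) * z)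
      (exp_eq_of _ _ n (by field_simp; ring))
  · simp only [Matrix.cons_val_two, Matrix.tail_cons, Matrix.head_cons]
    exact congrArg (fun z => (1 / Real.sqrt (8 * π ^ 2) : ℂ) * z)
      (exp_eq_of _ _ (m + n) (by push_cast; field_simp; ring))

lemma inj' (x y : EuclideanSpace ℝ (Fin 2)) (h : phiEL x = phiEL y) :
    ∃ m n : ℤ, x - y = m • (WithLp.equiv 2 (Fin 2 → ℝ)).symm ![1, 0]
            + n • (WithLp.equiv 2 (Fin 2 → ℝ)).symm ![1 / 2, Real.sqrt 3 / 2] := by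
  have hπ : (0:ℝ) < π := pi_pos
  have hs0 : (0:ℝ) < Real.sqrt 3 := Real.sqrt_pos.mpr (by norm_num)
  have hsne : Real.sqrt 3 ≠ 0 := ne_of_gt hs0
  have hs : Real.sqrt 3 ^ 2 = 3 := Real.sq_sqrt (by norm_num)
  have hq0 : (0:ℝ) < Real.sqrt (8 * π ^ 2) := Real.sqrt_pos.mpr (by positivity)
  have hc : (1 / (Real.sqrt (8 * π ^ 2) : ℂ)) ≠ 0 := by
    apply one_div_ne_zero
    exact_mod_cast ne_of_gt hq0
  have hcomp := congrArg (⇑(WithLp.equiv 2 (Fin 3 → ℂ))) h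
  rw [phiEL, phiEL, Equiv.apply_symm_apply, Equiv.apply_symm_apply] at hcomp
  have h0 := congrFun hcomp 0
  have h1 := congrFun hcomp 1
  simp only [Matrix.cons_val_zero, Matrix.cons_val_one, Matrix.head_cons] at h0 h1
  obtain ⟨m, hm⟩ := exp_inj _ _ (mul_left_cancel₀ hc h0)
  obtain ⟨n, hn⟩ := exp_inj _ _ (mul_left_cancel₀ hc h1)
  field_simp at hm hn
  have hb : x 1 - y 1 = n * Real.sqrt 3 / 2 := by
    have key : (4*π) * (x 1 - y 1) = (4*π) * (n * Real.sqrt 3 / 2) := by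
      linear_combination π * hn
    exact mul_left_cancel₀ (by positivity) key
  have ha : x 0 - y 0 = m + n / 2 := by
    have key : (2*π*Real.sqrt 3) * (x 0 - y 0) = (2*π*Real.sqrt 3) * (m + n / 2) := by
      linear_combination (2*π) * hm + (2*π) * hb
    exact mul_left_cancel₀ (by positivity) key
  refine ⟨m, n, (WithLp.equiv 2 (Fin 2 → ℝ)).injective (funext fun i => ?_)⟩
  fin_cases i
  · show x 0 - y 0 = _
    simp [WithLp.equiv_symm_apply, PiLp.toLp_apply, ha]
    ring
  · show x 1 - y 1 = _
    simp [WithLp.equiv_symm_apply, PiLp.toLp_apply, hb]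
    ring

theorem stmt_7 :
    -- well-defined on ℝ²/Γ_EL :
    (∀ x γ, inLatticeEL γ → phiEL (x + γ) = phiEL x) ∧
    -- injective on ℝ²/Γ_EL :
    (∀ x y, phiEL x = phiEL y → inLatticeEL (x - y)) ∧
    -- the image lies in the sphere of radius √(3/(8π²)) in ℂ³ ≅ ℝ⁶ :
    (∀ x, ‖phiEL x‖ = Real.sqrt (3 / (8 * π ^ 2))) ∧
    -- isometric immersion for h_EL, the metric induced from the Euclidean one on ℝ² :
    (∀ x v, ‖fderiv ℝ phiEL x v‖ = ‖v‖) := by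
  refine ⟨fun x γ hγ => periodic' x γ hγ, fun x y h => inj' x y h, norm_phiEL, fun x v => ?_⟩
  rw [(hasFDeriv_phiEL x).fderiv]
  exact norm_DphiEL x v
end

section
/- With the Laplacian −Δ = −a E₁² − b E₂² − c E₃² of the left-invariant metric h_{a,b,c} on SU(2), the functions ζ₁ and ζ₂ are eigenfunctions with eigenvalue a + b + c; ζ₁² − conj(ζ₂)² and ζ₁ζ₂ + conj(ζ₁)conj(ζ₂) are eigenfunctions with eigenvalue 4(b+c); ζ₁² + conj(ζ₂)² and ζ₁ζ₂ − conj(ζ₁)conj(ζ₂) with eigenvalue 4(c+a); and ζ₁·conj(ζ₂) and |ζ₁|² − |ζ₂|² with eigenvalue 4(a+b). -/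
/- STATEMENT 11: eigenfunctions of the Laplacian `−Δ = −aE₁² − bE₂² − cE₃²` of the
left-invariant metric `h_{a,b,c}` on SU(2):
`ζ₁, ζ₂` with eigenvalue `a+b+c`;
`ζ₁² − ζ̄₂², ζ₁ζ₂ + ζ̄₁ζ̄₂` with eigenvalue `4(b+c)`;
`ζ₁² + ζ̄₂², ζ₁ζ₂ − ζ̄₁ζ̄₂` with eigenvalue `4(c+a)`;
`ζ₁ζ̄₂, |ζ₁|² − |ζ₂|²` with eigenvalue `4(a+b)`. -/


open Complex

/-- `SU(2)`, identified with the unit sphere `{(ζ₁,ζ₂) : |ζ₁|² + |ζ₂|² = 1}` in `ℂ²`. -/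
def SU2 : Set (ℂ × ℂ) := {ζ | Complex.normSq ζ.1 + Complex.normSq ζ.2 = 1}

/-- The values of the left-invariant vector fields `E₁, E₂, E₃` of `SU(2)`, viewed as
vector fields on `ℂ²` tangent to the unit sphere:
`E₁ = (−i ζ̄₂, i ζ̄₁)`, `E₂ = (ζ̄₂, −ζ̄₁)`, `E₃ = (i ζ₁, i ζ₂)`. -/
noncomputable def Evf : Fin 3 → ℂ × ℂ → ℂ × ℂ
  | 0 => fun ζ => (-Complex.I * (starRingEnd ℂ) ζ.2, Complex.I * (starRingEnd ℂ) ζ.1)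
  | 1 => fun ζ => ((starRingEnd ℂ) ζ.2, -(starRingEnd ℂ) ζ.1)
  | 2 => fun ζ => (Complex.I * ζ.1, Complex.I * ζ.2)

/-- Differentiation along the left-invariant vector field `E_i`. -/
noncomputable def Eop {F : Type*} [NormedAddCommGroup F] [NormedSpace ℝ F] (i : Fin 3)
    (f : ℂ × ℂ → F) (ζ : ℂ × ℂ) : F := fderiv ℝ f ζ (Evf i ζ)

/-- The positive Laplacian `−Δ = −aE₁² − bE₂² − cE₃²` of `h_{a,b,c}`, acting on
complex-valued functions. -/
noncomputable def LapABC (a b c : ℝ) (f : ℂ × ℂ → ℂ) (ζ : ℂ × ℂ) : ℂ :=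
  -((a : ℂ) * Eop 0 (Eop 0 f) ζ + (b : ℂ) * Eop 1 (Eop 1 f) ζ + (c : ℂ) * Eop 2 (Eop 2 f) ζ)

/-! Each `Evf i` is a real-linear map of `ℂ²` with `Evf i ∘ Evf i = -id` (the three fields act
as the quaternion units). Hence `E_i² L = -L` for every real-linear `L`, and for a quadratic form
`q z = B z z` with `B` real-bilinear one gets `E_i² q = 2 (q ∘ Evf i - q)`, so
`-Δ q = 2 Σ a_i (q - q ∘ Evf i)`. Each of the six quadratics is invariant under one `Evf i` and
changes sign under the other two, which yields the eigenvalues `4 (b + c)`, `4 (c + a)`,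
`4 (a + b)`. -/

noncomputable def evfCLM (i : Fin 3) : ℂ × ℂ →L[ℝ] ℂ × ℂ :=
  LinearMap.toContinuousLinearMap
    { toFun := Evf i
      map_add' := fun z w => by fin_cases i <;> ext <;> simp [Evf] <;> ring
      map_smul' := fun r z => by fin_cases i <;> ext <;> simp [Evf] <;> ring }

@[simp]
theorem coe_evfCLM (i : Fin 3) : ⇑(evfCLM i) = Evf i := rfl

@[fun_prop]
theorem differentiable_Evf (i : Fin 3) : Differentiable ℝ (Evf i) :=
  (evfCLM i).differentiable

theorem Evf_Evf (i : Fin 3) (ζ : ℂ × ℂ) : Evf i (Evf i ζ) = -ζ := by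
  fin_cases i <;> ext <;> simp [Evf, ← mul_assoc]

section

variable {F : Type*} [NormedAddCommGroup F] [NormedSpace ℝ F]

theorem Eop_clm (i : Fin 3) (L : ℂ × ℂ →L[ℝ] F) : Eop i ⇑L = ⇑(L.comp (evfCLM i)) := by
  ext ζ
  simp [Eop]

theorem Eop_Eop_clm (i : Fin 3) (L : ℂ × ℂ →L[ℝ] F) : Eop i (Eop i ⇑L) = -⇑L := by
  ext ζ
  simp [Eop_clm, Evf_Evf]

theorem Eop_add (i : Fin 3) {f g : ℂ × ℂ → F} (hf : Differentiable ℝ f) (hg : Differentiable ℝ g) :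
    Eop i (fun z => f z + g z) = fun z => Eop i f z + Eop i g z := by
  ext ζ
  rw [Eop, fderiv_fun_add (hf ζ) (hg ζ)]
  rfl

variable {G H : Type*} [NormedAddCommGroup G] [NormedSpace ℝ G] [NormedAddCommGroup H]
  [NormedSpace ℝ H]

theorem Eop_bilinear (i : Fin 3) (B : G →L[ℝ] H →L[ℝ] F) (L : ℂ × ℂ →L[ℝ] G)
    (M : ℂ × ℂ →L[ℝ] H) :
    Eop i (fun z => B (L z) (M z)) =
      fun z => B ((L.comp (evfCLM i)) z) (M z) + B (L z) ((M.comp (evfCLM i)) z) := by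
  ext ζ
  rw [Eop, B.fderiv_of_bilinear L.differentiableAt M.differentiableAt]
  simp [add_comm]

theorem Eop_Eop_quadratic (i : Fin 3) (B : ℂ × ℂ →L[ℝ] ℂ × ℂ →L[ℝ] F) (ζ : ℂ × ℂ) :
    Eop i (Eop i (fun z => B z z)) ζ = (2 : ℝ) • (B (Evf i ζ) (Evf i ζ) - B ζ ζ) := by
  change Eop i (Eop i fun z => B (ContinuousLinearMap.id ℝ _ z) (ContinuousLinearMap.id ℝ _ z)) ζ
    = _
  rw [Eop_bilinear, Eop_add i (by fun_prop) (by fun_prop), Eop_bilinear, Eop_bilinear]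
  simp [Evf_Evf]
  module

end

theorem LapABC_clm (a b c : ℝ) (L : ℂ × ℂ →L[ℝ] ℂ) (ζ : ℂ × ℂ) :
    LapABC a b c L ζ = ((a + b + c : ℝ) : ℂ) * L ζ := by
  simp only [LapABC, Eop_Eop_clm, Pi.neg_apply]
  push_cast
  ring

theorem Eop_Eop_quadratic_of_parity (i : Fin 3) (B : ℂ × ℂ →L[ℝ] ℂ × ℂ →L[ℝ] ℂ) {s : ℂ}
    (hs : ∀ z, B (Evf i z) (Evf i z) = s * B z z) (ζ : ℂ × ℂ) :
    Eop i (Eop i (fun z => B z z)) ζ = 2 * (s - 1) * B ζ ζ := by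
  rw [Eop_Eop_quadratic, hs, RCLike.real_smul_eq_coe_mul]
  push_cast
  ring

theorem LapABC_quadratic (a b c : ℝ) {f : ℂ × ℂ → ℂ} (B : ℂ × ℂ →L[ℝ] ℂ × ℂ →L[ℝ] ℂ)
    (hf : ∀ z, f z = B z z) (s₀ s₁ s₂ : ℂ) (h₀ : ∀ z, f (Evf 0 z) = s₀ * f z)
    (h₁ : ∀ z, f (Evf 1 z) = s₁ * f z) (h₂ : ∀ z, f (Evf 2 z) = s₂ * f z) (ζ : ℂ × ℂ) :
    LapABC a b c f ζ = 2 * (a * (1 - s₀) + b * (1 - s₁) + c * (1 - s₂)) * f ζ := by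
  obtain rfl : f = fun z => B z z := funext hf
  rw [LapABC, Eop_Eop_quadratic_of_parity 0 B h₀, Eop_Eop_quadratic_of_parity 1 B h₁,
    Eop_Eop_quadratic_of_parity 2 B h₂]
  ring

noncomputable def mulForm (L M : ℂ × ℂ →L[ℝ] ℂ) : ℂ × ℂ →L[ℝ] ℂ × ℂ →L[ℝ] ℂ :=
  (ContinuousLinearMap.mul ℝ ℂ).bilinearComp L M

@[simp]
theorem mulForm_apply (L M : ℂ × ℂ →L[ℝ] ℂ) (z w : ℂ × ℂ) : mulForm L M z w = L z * M w := rfl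

noncomputable def conjFst : ℂ × ℂ →L[ℝ] ℂ := (conjCLE : ℂ →L[ℝ] ℂ).comp (.fst ℝ ℂ ℂ)

noncomputable def conjSnd : ℂ × ℂ →L[ℝ] ℂ := (conjCLE : ℂ →L[ℝ] ℂ).comp (.snd ℝ ℂ ℂ)

@[simp]
theorem conjFst_apply (z : ℂ × ℂ) : conjFst z = (starRingEnd ℂ) z.1 := rfl

@[simp]
theorem conjSnd_apply (z : ℂ × ℂ) : conjSnd z = (starRingEnd ℂ) z.2 := rfl

theorem stmt_11_general (a b c : ℝ) : ∀ ζ ∈ SU2,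
    (LapABC a b c (fun z => z.1) ζ = ((a + b + c : ℝ) : ℂ) * ζ.1) ∧
    (LapABC a b c (fun z => z.2) ζ = ((a + b + c : ℝ) : ℂ) * ζ.2) ∧
    (LapABC a b c (fun z => z.1 ^ 2 - ((starRingEnd ℂ) z.2) ^ 2) ζ
      = ((4 * (b + c) : ℝ) : ℂ) * (ζ.1 ^ 2 - ((starRingEnd ℂ) ζ.2) ^ 2)) ∧
    (LapABC a b c (fun z => z.1 * z.2 + (starRingEnd ℂ) z.1 * (starRingEnd ℂ) z.2) ζ
      = ((4 * (b + c) : ℝ) : ℂ) * (ζ.1 * ζ.2 + (starRingEnd ℂ) ζ.1 * (starRingEnd ℂ) ζ.2)) ∧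
    (LapABC a b c (fun z => z.1 ^ 2 + ((starRingEnd ℂ) z.2) ^ 2) ζ
      = ((4 * (c + a) : ℝ) : ℂ) * (ζ.1 ^ 2 + ((starRingEnd ℂ) ζ.2) ^ 2)) ∧
    (LapABC a b c (fun z => z.1 * z.2 - (starRingEnd ℂ) z.1 * (starRingEnd ℂ) z.2) ζ
      = ((4 * (c + a) : ℝ) : ℂ) * (ζ.1 * ζ.2 - (starRingEnd ℂ) ζ.1 * (starRingEnd ℂ) ζ.2)) ∧
    (LapABC a b c (fun z => z.1 * (starRingEnd ℂ) z.2) ζ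
      = ((4 * (a + b) : ℝ) : ℂ) * (ζ.1 * (starRingEnd ℂ) ζ.2)) ∧
    (LapABC a b c (fun z => ((Complex.normSq z.1 - Complex.normSq z.2 : ℝ) : ℂ)) ζ
      = ((4 * (a + b) : ℝ) : ℂ) * ((Complex.normSq ζ.1 - Complex.normSq ζ.2 : ℝ) : ℂ)) := by
  intro ζ _
  refine ⟨LapABC_clm a b c (.fst ℝ ℂ ℂ) ζ, LapABC_clm a b c (.snd ℝ ℂ ℂ) ζ, ?_, ?_, ?_, ?_, ?_, ?_⟩
  · rw [LapABC_quadratic a b c (mulForm (.fst ℝ ℂ ℂ) (.fst ℝ ℂ ℂ) - mulForm conjSnd conjSnd)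
      (fun z => by simp [sq]) 1 (-1) (-1)]
    · push_cast; ring
    all_goals intro z; simp [Evf, mul_pow] <;> grind [I_sq]
  · rw [LapABC_quadratic a b c (mulForm (.fst ℝ ℂ ℂ) (.snd ℝ ℂ ℂ) + mulForm conjFst conjSnd)
      (fun z => by simp) 1 (-1) (-1)]
    · push_cast; ring
    all_goals intro z; simp [Evf]; grind [I_sq]
  · rw [LapABC_quadratic a b c (mulForm (.fst ℝ ℂ ℂ) (.fst ℝ ℂ ℂ) + mulForm conjSnd conjSnd)
      (fun z => by simp [sq]) (-1) 1 (-1)]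
    · push_cast; ring
    all_goals intro z; simp [Evf, mul_pow] <;> grind [I_sq]
  · rw [LapABC_quadratic a b c (mulForm (.fst ℝ ℂ ℂ) (.snd ℝ ℂ ℂ) - mulForm conjFst conjSnd)
      (fun z => by simp) (-1) 1 (-1)]
    · push_cast; ring
    all_goals intro z; simp [Evf]; grind [I_sq]
  · rw [LapABC_quadratic a b c (mulForm (.fst ℝ ℂ ℂ) conjSnd) (fun z => by simp) (-1) (-1) 1]
    · push_cast; ring
    all_goals intro z; simp [Evf]; grind [I_sq]
  · rw [LapABC_quadratic a b c (mulForm (.fst ℝ ℂ ℂ) conjFst - mulForm (.snd ℝ ℂ ℂ) conjSnd)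
      (fun z => by simp [mul_conj]) (-1) (-1) 1]
    · push_cast; ring
    all_goals intro z; simp [Evf, normSq_mul]

theorem stmt_11 (a b c : ℝ) (ha : 0 < a) (hb : 0 < b) (hc : 0 < c) : ∀ ζ ∈ SU2,
    (LapABC a b c (fun z => z.1) ζ = ((a + b + c : ℝ) : ℂ) * ζ.1) ∧
    (LapABC a b c (fun z => z.2) ζ = ((a + b + c : ℝ) : ℂ) * ζ.2) ∧
    (LapABC a b c (fun z => z.1 ^ 2 - ((starRingEnd ℂ) z.2) ^ 2) ζ
      = ((4 * (b + c) : ℝ) : ℂ) * (ζ.1 ^ 2 - ((starRingEnd ℂ) ζ.2) ^ 2)) ∧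
    (LapABC a b c (fun z => z.1 * z.2 + (starRingEnd ℂ) z.1 * (starRingEnd ℂ) z.2) ζ
      = ((4 * (b + c) : ℝ) : ℂ) * (ζ.1 * ζ.2 + (starRingEnd ℂ) ζ.1 * (starRingEnd ℂ) ζ.2)) ∧
    (LapABC a b c (fun z => z.1 ^ 2 + ((starRingEnd ℂ) z.2) ^ 2) ζ
      = ((4 * (c + a) : ℝ) : ℂ) * (ζ.1 ^ 2 + ((starRingEnd ℂ) ζ.2) ^ 2)) ∧
    (LapABC a b c (fun z => z.1 * z.2 - (starRingEnd ℂ) z.1 * (starRingEnd ℂ) z.2) ζ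
      = ((4 * (c + a) : ℝ) : ℂ) * (ζ.1 * ζ.2 - (starRingEnd ℂ) ζ.1 * (starRingEnd ℂ) ζ.2)) ∧
    (LapABC a b c (fun z => z.1 * (starRingEnd ℂ) z.2) ζ
      = ((4 * (a + b) : ℝ) : ℂ) * (ζ.1 * (starRingEnd ℂ) ζ.2)) ∧
    (LapABC a b c (fun z => ((Complex.normSq z.1 - Complex.normSq z.2 : ℝ) : ℂ)) ζ
      = ((4 * (a + b) : ℝ) : ℂ) * ((Complex.normSq ζ.1 - Complex.normSq ζ.2 : ℝ) : ℂ)) :=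
  stmt_11_general a b c
end
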